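/- arXiv:2401.11357 — 4 statements merged into one kernel-verified Lean document; each statement's English description precedes it below -/
import Mathlib

section
/- For t ∈ (0,1), ε ∈ (0,1), and integers k, l ≥ 1, the identity I_{k,l}(t;ε) = t·(I_{k,l}(t;ε) − I_{k,l-2}(t;ε)) + I_{k-1,l-2}(t;ε) holds whenever l ≥ 3, where I_{k,l}(t;ε) = ∫_ε^1 (1−x)^{l/2 − 1} / (1 − (1−t)x)^k dx. -/
lemma aux_integrable (t ε : ℝ) (ht0 : 0 < t) (ht1 : t < 1) (hε0 : 0 < ε) (hε1 : ε < 1)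
    (r : ℝ) (hr : -1 < r) (m : ℕ) :
    IntervalIntegrable (fun x => (1 - x) ^ r / (1 - (1 - t) * x) ^ m) MeasureTheory.volume ε 1 := by
  have h1 : IntervalIntegrable (fun x : ℝ => x ^ r) MeasureTheory.volume 0 (1 - ε) :=
    intervalIntegral.intervalIntegrable_rpow' hr
  have h2 := (h1.comp_sub_left 1)
  simp only [sub_zero, sub_sub_cancel] at h2
  have h3 : IntervalIntegrable (fun x : ℝ => (1 - x) ^ r) MeasureTheory.volume ε 1 := h2.symm
  have hcont : ContinuousOn (fun x : ℝ => ((1 - (1 - t) * x) ^ m)⁻¹) (Set.uIcc ε 1) := by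
    apply ContinuousOn.inv₀
    · fun_prop
    · intro x hx
      rw [Set.uIcc_of_le hε1.le] at hx
      have : 0 < 1 - (1 - t) * x := by nlinarith [hx.1, hx.2]
      positivity
  have := h3.mul_continuousOn hcont
  simpa [div_eq_mul_inv] using this

theorem I_recursion (t ε : ℝ) (ht : t ∈ Set.Ioo (0:ℝ) 1) (hε : ε ∈ Set.Ioo (0:ℝ) 1)
    (k l : ℕ) (hk : 1 ≤ k) (hl : 3 ≤ l) :
    ∫ x in ε..1, (1 - x) ^ ((l : ℝ) / 2 - 1) / (1 - (1 - t) * x) ^ k =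
      t * ((∫ x in ε..1, (1 - x) ^ ((l : ℝ) / 2 - 1) / (1 - (1 - t) * x) ^ k) -
            ∫ x in ε..1, (1 - x) ^ (((l : ℝ) - 2) / 2 - 1) / (1 - (1 - t) * x) ^ k) +
        ∫ x in ε..1, (1 - x) ^ (((l : ℝ) - 2) / 2 - 1) / (1 - (1 - t) * x) ^ (k - 1) := by
  obtain ⟨ht0, ht1⟩ := ht
  obtain ⟨hε0, hε1⟩ := hε
  obtain ⟨m, rfl⟩ : ∃ m, k = m + 1 := ⟨k - 1, (Nat.succ_pred_eq_of_pos hk).symm⟩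
  simp only [Nat.add_sub_cancel]
  have hl3 : (3:ℝ) ≤ (l:ℝ) := by exact_mod_cast hl
  have hr1 : (-1:ℝ) < (l:ℝ) / 2 - 1 := by linarith
  have hr2 : (-1:ℝ) < ((l:ℝ) - 2) / 2 - 1 := by linarith
  have hf := aux_integrable t ε ht0 ht1 hε0 hε1 _ hr1 (m + 1)
  have hg := aux_integrable t ε ht0 ht1 hε0 hε1 _ hr2 (m + 1)
  have hh := aux_integrable t ε ht0 ht1 hε0 hε1 _ hr2 m
  rw [mul_sub, ← intervalIntegral.integral_const_mul t, ← intervalIntegral.integral_const_mul t,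
    ← intervalIntegral.integral_sub (hf.const_mul t) (hg.const_mul t),
    ← intervalIntegral.integral_add ((hf.const_mul t).sub (hg.const_mul t)) hh]
  apply intervalIntegral.integral_congr
  intro x hx
  dsimp only
  rw [Set.uIcc_of_le hε1.le] at hx
  have hD : 0 < 1 - (1 - t) * x := by nlinarith [hx.1, hx.2]
  set D := 1 - (1 - t) * x with hDdef
  have hDne : D ≠ 0 := hD.ne'
  have hu : 0 ≤ 1 - x := by linarith [hx.2]
  have hexp : ((l:ℝ) - 2) / 2 - 1 + 1 = (l:ℝ) / 2 - 1 := by ring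
  rcases eq_or_lt_of_le hu with h0 | h0
  · -- x = 1, so 1 - x = 0 and D = t
    have hx1 : x = 1 := by linarith
    have hDt : D = t := by rw [hDdef, hx1]; ring
    have h1x : (1:ℝ) - x = 0 := h0.symm
    have hz1 : ((1:ℝ) - x) ^ ((l:ℝ) / 2 - 1) = 0 := by
      rw [h1x]; exact Real.zero_rpow (by intro h; rw [sub_eq_zero] at h; linarith)
    rw [hz1, hDt]
    have ht' : t ^ (m + 1) = t * t ^ m := by ring
    rw [ht']
    field_simp
    ring
  · -- 1 - x > 0
    have hsplit : ((1:ℝ) - x) ^ ((l:ℝ) / 2 - 1)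
        = (1 - x) ^ (((l:ℝ) - 2) / 2 - 1) * (1 - x) := by
      rw [← hexp, Real.rpow_add_one h0.ne']
    have hDsplit : D = t + (1 - t) * (1 - x) := by rw [hDdef]; ring
    rw [hsplit]
    have hpow : D ^ (m + 1) = D ^ m * D := by ring
    rw [hpow]
    field_simp
    ring_nf
    rw [hDdef]; ring
end

section
/- Let b_0 ∈ C^{n+1} with |b_0| = 1 and let v ∈ C^{n+1} satisfy v̄·b_0 + v·b̄_0 < 0 (so that b_0 + εv lies in the open unit ball for small ε > 0). Then lim_{ε→0+} Φ_{b_0 + εv}(−b_0) = −(v·b̄_0 / (b_0·v̄)) b_0, where Φ_b are the ball automorphisms defined by Φ_b(z) = √(1−|b|²)·(z+b)/(1+b̄·z) + (1/(1+√(1−|b|²)))·((|b|²+b̄·z)/(1+b̄·z))·b. -/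
open scoped ComplexInnerProductSpace

/-- The Möbius-type biholomorphic automorphism of the unit ball of `ℂ^{n+1}`
associated to `b`. -/
noncomputable def Phi {n : ℕ} (b : EuclideanSpace ℂ (Fin (n + 1)))
    (z : EuclideanSpace ℂ (Fin (n + 1))) : EuclideanSpace ℂ (Fin (n + 1)) :=
  ((Real.sqrt (1 - ‖b‖ ^ 2) : ℂ) / (1 + ⟪b, z⟫)) • (z + b) +
    ((1 / (1 + (Real.sqrt (1 - ‖b‖ ^ 2) : ℂ))) *
      (((‖b‖ ^ 2 : ℝ) + ⟪b, z⟫) / (1 + ⟪b, z⟫))) • b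

theorem Phi_limit_at_minus_b0 (n : ℕ) (b₀ v : EuclideanSpace ℂ (Fin (n + 1)))
    (hb₀ : ‖b₀‖ = 1) (hv : (⟪v, b₀⟫ + ⟪b₀, v⟫).re < 0) :
    Filter.Tendsto (fun ε : ℝ => Phi (b₀ + ε • v) (-b₀))
      (nhdsWithin 0 (Set.Ioi 0))
      (nhds (-(⟪b₀, v⟫ / ⟪v, b₀⟫) • b₀)) := by
  set c : ℂ := ⟪v, b₀⟫ with hc_def
  have hconj : (⟪b₀, v⟫ : ℂ) = starRingEnd ℂ c := by
    rw [hc_def, inner_conj_symm]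
  have hcre : c.re < 0 := by
    have : (c + starRingEnd ℂ c).re = 2 * c.re := by
      simp [Complex.add_re, Complex.conj_re]; ring
    rw [hconj, this] at hv
    linarith
  have hc : c ≠ 0 := by
    intro h
    rw [h] at hcre
    simp at hcre
  -- the simplified function
  set g : ℝ → EuclideanSpace ℂ (Fin (n + 1)) := fun ε =>
    (-(Real.sqrt (1 - ‖b₀ + ε • v‖ ^ 2) : ℂ) / c) • v +
      ((1 / (1 + (Real.sqrt (1 - ‖b₀ + ε • v‖ ^ 2) : ℂ))) *
        (-(starRingEnd ℂ c + ε * (‖v‖ ^ 2 : ℝ)) / c)) • (b₀ + ε • v) with hg_def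
  have key : ∀ ε : ℝ, ε ≠ 0 → Phi (b₀ + ε • v) (-b₀) = g ε := by
    intro ε hε
    have hεℂ : (ε : ℂ) ≠ 0 := by exact_mod_cast hε
    set b := b₀ + ε • v with hb_def
    have hsm : (ε : ℝ) • v = (ε : ℂ) • v := rfl
    have hA : (⟪b, -b₀⟫ : ℂ) = -(1 + ε * c) := by
      rw [hb_def, inner_neg_right, inner_add_left, hsm, inner_smul_left,
        inner_self_eq_norm_sq_to_K, hb₀]
      push_cast
      ring_nf
      rw [Complex.conj_ofReal]
    have hdenom : (1 : ℂ) + ⟪b, -b₀⟫ = -(ε * c) := by rw [hA]; ring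
    have hB : -b₀ + b = (ε : ℂ) • v := by
      rw [hb_def, hsm]; abel
    have hC : ((‖b‖ ^ 2 : ℝ) : ℂ) + ⟪b, -b₀⟫ =
        ε * (starRingEnd ℂ c + ε * (‖v‖ ^ 2 : ℝ)) := by
      have h1 : ((‖b‖ ^ 2 : ℝ) : ℂ) = ⟪b, b⟫ := by
        rw [inner_self_eq_norm_sq_to_K]; norm_cast
      rw [h1, inner_neg_right, ← sub_eq_add_neg, ← inner_sub_right]
      have h2 : b - b₀ = (ε : ℂ) • v := by rw [hb_def, hsm]; abel
      rw [h2, inner_smul_right, hb_def, inner_add_left, hsm, inner_smul_left,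
        hconj, Complex.conj_ofReal]
      have h3 : (⟪v, v⟫ : ℂ) = ((‖v‖ ^ 2 : ℝ) : ℂ) := by
        rw [inner_self_eq_norm_sq_to_K]; norm_cast
      rw [h3]
    rw [Phi, hdenom, hB, hC, hg_def]
    simp only [← hb_def]
    congr 1
    · rw [smul_smul]
      congr 1
      field_simp
    · congr 1
      congr 1
      field_simp
  have heq : (fun ε : ℝ => Phi (b₀ + ε • v) (-b₀)) =ᶠ[nhdsWithin 0 (Set.Ioi 0)] g := by
    filter_upwards [self_mem_nhdsWithin] with ε hε
    exact key ε (ne_of_gt hε)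
  rw [Filter.tendsto_congr' heq]
  -- now show g tends to the limit
  have hg0 : g 0 = -(⟪b₀, v⟫ / ⟪v, b₀⟫) • b₀ := by
    have h0 : Real.sqrt (1 - ‖b₀ + (0:ℝ) • v‖ ^ 2) = 0 := by
      simp [hb₀]
    rw [hg_def]
    simp only [h0, hconj]
    push_cast
    simp only [zero_smul, add_zero, neg_zero, zero_div, zero_add, mul_zero,
      one_mul, div_one, zero_mul]
    rw [← hc_def, neg_div]
  have hcont : ContinuousAt g 0 := by
    have hnorm : Continuous fun ε : ℝ => ‖b₀ + ε • v‖ := by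
      fun_prop
    have hsq : Continuous fun ε : ℝ =>
        ((Real.sqrt (1 - ‖b₀ + ε • v‖ ^ 2) : ℝ) : ℂ) := by
      apply Complex.continuous_ofReal.comp
      exact Real.continuous_sqrt.comp (by fun_prop)
    have hd : (1 : ℂ) + (Real.sqrt (1 - ‖b₀ + (0:ℝ) • v‖ ^ 2) : ℂ) ≠ 0 := by
      simp [hb₀]
    apply ContinuousAt.add
    · exact ContinuousAt.fun_smul (by fun_prop) (by fun_prop)
    · apply ContinuousAt.fun_smul
      · apply ContinuousAt.fun_mul
        · exact ContinuousAt.div continuousAt_const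
            (ContinuousAt.add continuousAt_const hsq.continuousAt) hd
        · fun_prop
      · fun_prop
  rw [← hg0]
  exact (hcont.continuousWithinAt).tendsto
end

section
/- The map φ_H(x+iy) = (1/√3)( e^{(4√3/3)πi y}, e^{2πi(x − (√3/3)y)}, e^{−2πi(x + (√3/3)y)} ) into S^5 ⊂ C³ is horizontal: for every point p in C/Λ_H, the image of the differential of φ_H at p is orthogonal (for the real inner product Re⟨·,·⟩ on C³) to the vector i·φ_H(p). -/
open Real RealInnerProductSpace

noncomputable def phiH (x y : ℝ) : EuclideanSpace ℂ (Fin 3) :=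
  (Real.sqrt 3)⁻¹ • (WithLp.equiv 2 (Fin 3 → ℂ)).symm
    ![Complex.exp ((4 * Real.sqrt 3 / 3 * π * y : ℝ) * Complex.I),
      Complex.exp ((2 * π * (x - Real.sqrt 3 / 3 * y) : ℝ) * Complex.I),
      Complex.exp ((-(2 * π) * (x + Real.sqrt 3 / 3 * y) : ℝ) * Complex.I)]

lemma expDeriv (a b x : ℝ) :
    HasDerivAt (fun s : ℝ => Complex.exp ((a * s + b : ℝ) * Complex.I))
      ((a : ℂ) * Complex.I * Complex.exp ((a * x + b : ℝ) * Complex.I)) x := by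
  have h : HasDerivAt (fun z : ℂ => Complex.exp (((a : ℂ) * z + b) * Complex.I))
      ((a : ℂ) * Complex.I * Complex.exp (((a : ℂ) * x + b) * Complex.I)) (x : ℂ) := by
    have h1 : HasDerivAt (fun z : ℂ => ((a : ℂ) * z + b) * Complex.I)
        ((a : ℂ) * Complex.I) (x : ℂ) := by
      simpa using (((hasDerivAt_id (x : ℂ)).const_mul (a : ℂ)).add_const (b : ℂ)).mul_const Complex.I
    simpa [mul_comm, mul_assoc, mul_left_comm] using h1.cexp
  have h2 := h.comp_ofReal
  have he : (fun s : ℝ => Complex.exp ((a * s + b : ℝ) * Complex.I))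
      = fun s : ℝ => Complex.exp (((a : ℂ) * s + b) * Complex.I) := by
    funext s; norm_cast
  have hv : ((a * x + b : ℝ) : ℂ) * Complex.I = ((a : ℂ) * x + b) * Complex.I := by push_cast; ring
  rw [he, hv]; exact h2

lemma hasDerivAt_aux (a b : Fin 3 → ℝ) (t : ℝ) :
    HasDerivAt (fun s : ℝ => ((Real.sqrt 3)⁻¹ • (WithLp.equiv 2 (Fin 3 → ℂ)).symm
        (fun i => Complex.exp ((a i * s + b i : ℝ) * Complex.I)) : EuclideanSpace ℂ (Fin 3)))
      ((Real.sqrt 3)⁻¹ • (WithLp.equiv 2 (Fin 3 → ℂ)).symm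
        (fun i => (a i : ℂ) * Complex.I * Complex.exp ((a i * t + b i : ℝ) * Complex.I))) t := by
  have hpi : HasDerivAt
      (fun s : ℝ => (fun i => Complex.exp ((a i * s + b i : ℝ) * Complex.I) : Fin 3 → ℂ))
      (fun i => (a i : ℂ) * Complex.I * Complex.exp ((a i * t + b i : ℝ) * Complex.I)) t :=
    hasDerivAt_pi.2 fun i => expDeriv (a i) (b i) t
  have hL := ((PiLp.continuousLinearEquiv 2 ℝ
    (fun _ : Fin 3 => ℂ)).symm.toContinuousLinearMap.hasFDerivAt.comp_hasDerivAt t hpi)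
  exact hL.const_smul ((Real.sqrt 3)⁻¹)

lemma term_aux (c α r : ℝ) :
    (c : ℂ) * ((α : ℂ) * -Complex.I * (starRingEnd ℂ) (Complex.exp ((r : ℂ) * Complex.I))) *
      (Complex.I * ((c : ℂ) * Complex.exp ((r : ℂ) * Complex.I))) = ((c ^ 2 * α : ℝ) : ℂ) := by
  rw [← Complex.exp_conj]
  simp only [map_mul, Complex.conj_ofReal, Complex.conj_I]
  have h := Complex.exp_ne_zero ((r : ℂ) * Complex.I)
  have h2 : (r : ℂ) * -Complex.I = -((r : ℂ) * Complex.I) := by ring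
  rw [h2, Complex.exp_neg]
  field_simp
  ring_nf
  simp [Complex.I_sq]

lemma inner_aux (a b : Fin 3 → ℝ) (x : ℝ) (h : a 0 + a 1 + a 2 = 0) :
    ⟪((Real.sqrt 3)⁻¹ • (WithLp.equiv 2 (Fin 3 → ℂ)).symm
        (fun i => (a i : ℂ) * Complex.I * Complex.exp ((a i * x + b i : ℝ) * Complex.I)) :
        EuclideanSpace ℂ (Fin 3)),
      Complex.I • ((Real.sqrt 3)⁻¹ • (WithLp.equiv 2 (Fin 3 → ℂ)).symm
        (fun i => Complex.exp ((a i * x + b i : ℝ) * Complex.I)) :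
        EuclideanSpace ℂ (Fin 3))⟫ = 0 := by
  erw [real_inner_eq_re_inner ℂ, PiLp.inner_apply]
  simp only [Fin.sum_univ_three, WithLp.equiv_symm_apply, PiLp.smul_apply,
    RCLike.inner_apply', smul_eq_mul, Complex.real_smul,
    map_mul, Complex.conj_ofReal, Complex.conj_I]
  rw [term_aux, term_aux, term_aux]
  rw [← Complex.ofReal_add, ← Complex.ofReal_add, RCLike.re_to_complex, Complex.ofReal_re]
  linear_combination ((Real.sqrt 3)⁻¹ ^ 2) * h

theorem phiH_horizontal (x y : ℝ) :
    ⟪deriv (fun s => phiH s y) x, Complex.I • phiH x y⟫ = 0 ∧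
      ⟪deriv (fun s => phiH x s) y, Complex.I • phiH x y⟫ = 0 := by
  constructor
  · set a : Fin 3 → ℝ := ![0, 2 * π, -(2 * π)] with ha
    set b : Fin 3 → ℝ := ![4 * Real.sqrt 3 / 3 * π * y, -(2 * π * (Real.sqrt 3 / 3 * y)),
      -(2 * π * (Real.sqrt 3 / 3 * y))] with hb
    have he : (fun s => phiH s y) = fun s : ℝ =>
        ((Real.sqrt 3)⁻¹ • (WithLp.equiv 2 (Fin 3 → ℂ)).symm
          (fun i => Complex.exp ((a i * s + b i : ℝ) * Complex.I)) :
          EuclideanSpace ℂ (Fin 3)) := by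
      funext s
      unfold phiH
      congr 2
      funext i
      fin_cases i <;> simp [ha, hb] <;> try ring_nf
    have hx : phiH x y = ((Real.sqrt 3)⁻¹ • (WithLp.equiv 2 (Fin 3 → ℂ)).symm
        (fun i => Complex.exp ((a i * x + b i : ℝ) * Complex.I)) :
        EuclideanSpace ℂ (Fin 3)) := congrFun he x
    rw [he, (hasDerivAt_aux a b x).deriv, hx]
    exact inner_aux a b x (by simp [ha]; try ring)
  · set a : Fin 3 → ℝ := ![4 * Real.sqrt 3 / 3 * π, -(2 * π * (Real.sqrt 3 / 3)),
      -(2 * π * (Real.sqrt 3 / 3))] with ha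
    set b : Fin 3 → ℝ := ![0, 2 * π * x, -(2 * π) * x] with hb
    have he : (fun s => phiH x s) = fun s : ℝ =>
        ((Real.sqrt 3)⁻¹ • (WithLp.equiv 2 (Fin 3 → ℂ)).symm
          (fun i => Complex.exp ((a i * s + b i : ℝ) * Complex.I)) :
          EuclideanSpace ℂ (Fin 3)) := by
      funext s
      unfold phiH
      congr 2
      funext i
      fin_cases i <;> simp [ha, hb] <;> try ring_nf
    have hx : phiH x y = ((Real.sqrt 3)⁻¹ • (WithLp.equiv 2 (Fin 3 → ℂ)).symm
        (fun i => Complex.exp ((a i * y + b i : ℝ) * Complex.I)) :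
        EuclideanSpace ℂ (Fin 3)) := congrFun he y
    rw [he, (hasDerivAt_aux a b y).deriv, hx]
    exact inner_aux a b y (by simp [ha]; try ring)
end

section
/- For each pair of distinct points p, q in the unit sphere S^{2n+1} ⊂ C^{n+1}, there exists a vector b in the open unit ball of C^{n+1} and a unitary matrix A ∈ U(n+1) such that the CR-automorphism Ψ = Ψ_A ∘ Ψ_b of S^{2n+1} sends p and q to a pair of antipodal points, i.e. Ψ(p) = −Ψ(q). (Equivalently: the group generated by the boundary restrictions of ball automorphisms acts so as to make any two distinct boundary points antipodal.) -/
open scoped ComplexInnerProductSpace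

private lemma aux_antipodal₁ (cb S dp dq b1 b2 : ℂ) (hdp : dp ≠ 0) (hdq : dq ≠ 0)
    (h1s : 1 + S ≠ 0) (h1 : b1 * (2 - cb) = -1) (h2 : b2 = (1 - cb) * b1)
    (h3 : dp = (1 - cb) * dq) (h4 : S ^ 2 = -(2 * b1 * dp)) :
    S / (1 + (dp - 1)) * (1 + b1 * 1) +
        1 / (1 + S) * ((1 - S ^ 2 + (dp - 1)) / (1 + (dp - 1))) * (b1 * 1) +
      (S / (1 + (dq - 1)) * (b1 * 1) +
        1 / (1 + S) * ((1 - S ^ 2 + (dq - 1)) / (1 + (dq - 1))) * (b1 * 1)) = 0 := by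
  have hne : (1 + S) * dp * dq ≠ 0 := mul_ne_zero (mul_ne_zero h1s hdp) hdq
  have main : (S / (1 + (dp - 1)) * (1 + b1 * 1) +
        1 / (1 + S) * ((1 - S ^ 2 + (dp - 1)) / (1 + (dp - 1))) * (b1 * 1) +
      (S / (1 + (dq - 1)) * (b1 * 1) +
        1 / (1 + S) * ((1 - S ^ 2 + (dq - 1)) / (1 + (dq - 1))) * (b1 * 1))) *
        ((1 + S) * dp * dq) = 0 := by
    have expand : (S / (1 + (dp - 1)) * (1 + b1 * 1) +
        1 / (1 + S) * ((1 - S ^ 2 + (dp - 1)) / (1 + (dp - 1))) * (b1 * 1) +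
      (S / (1 + (dq - 1)) * (b1 * 1) +
        1 / (1 + S) * ((1 - S ^ 2 + (dq - 1)) / (1 + (dq - 1))) * (b1 * 1))) *
        ((1 + S) * dp * dq)
        = dq * (S ^ 2 + 2 * b1 * dp) + S * dq * (b1 * (2 - cb) + 1) +
          S * b1 * (dp - (1 - cb) * dq) := by
      rw [show (1:ℂ) + (dp - 1) = dp by ring, show (1:ℂ) + (dq - 1) = dq by ring]
      field_simp
      ring
    rw [expand]
    linear_combination dq * h4 + S * dq * h1 + S * b1 * h3
  rcases mul_eq_zero.mp main with h | h
  · exact h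
  · exact absurd h hne

private lemma aux_antipodal₂ (cb S dp dq b1 b2 : ℂ) (hdp : dp ≠ 0) (hdq : dq ≠ 0)
    (h1s : 1 + S ≠ 0) (h1 : b1 * (2 - cb) = -1) (h2 : b2 = (1 - cb) * b1)
    (h3 : dp = (1 - cb) * dq) (h4 : S ^ 2 = -(2 * b1 * dp)) :
    S / (1 + (dp - 1)) * (b2 * 1) +
        1 / (1 + S) * ((1 - S ^ 2 + (dp - 1)) / (1 + (dp - 1))) * (b2 * 1) +
      (S / (1 + (dq - 1)) * (1 + b2 * 1) +
        1 / (1 + S) * ((1 - S ^ 2 + (dq - 1)) / (1 + (dq - 1))) * (b2 * 1)) = 0 := by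
  have hne : (1 + S) * dp * dq ≠ 0 := mul_ne_zero (mul_ne_zero h1s hdp) hdq
  have main : (S / (1 + (dp - 1)) * (b2 * 1) +
        1 / (1 + S) * ((1 - S ^ 2 + (dp - 1)) / (1 + (dp - 1))) * (b2 * 1) +
      (S / (1 + (dq - 1)) * (1 + b2 * 1) +
        1 / (1 + S) * ((1 - S ^ 2 + (dq - 1)) / (1 + (dq - 1))) * (b2 * 1))) *
        ((1 + S) * dp * dq) = 0 := by
    have expand : (S / (1 + (dp - 1)) * (b2 * 1) +
        1 / (1 + S) * ((1 - S ^ 2 + (dp - 1)) / (1 + (dp - 1))) * (b2 * 1) +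
      (S / (1 + (dq - 1)) * (1 + b2 * 1) +
        1 / (1 + S) * ((1 - S ^ 2 + (dq - 1)) / (1 + (dq - 1))) * (b2 * 1))) *
        ((1 + S) * dp * dq)
        = S * dp + S ^ 2 * dp + S * b2 * (dp + dq) + 2 * dp * dq * b2 := by
      rw [show (1:ℂ) + (dp - 1) = dp by ring, show (1:ℂ) + (dq - 1) = dq by ring]
      field_simp
      ring
    rw [expand]
    linear_combination (S * (dp + dq) + 2 * dp * dq) * h2 + S * dp * h1 -
      (S * b1 + 2 * b1 * dp) * h3 + dp * h4
  rcases mul_eq_zero.mp main with h | h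
  · exact h
  · exact absurd h hne

theorem exists_CR_automorphism_antipodal (n : ℕ)
    (p q : EuclideanSpace ℂ (Fin (n + 1))) (hp : ‖p‖ = 1) (hq : ‖q‖ = 1) (hpq : p ≠ q) :
    ∃ b : EuclideanSpace ℂ (Fin (n + 1)), ‖b‖ < 1 ∧
      ∃ A : EuclideanSpace ℂ (Fin (n + 1)) ≃ₗᵢ[ℂ] EuclideanSpace ℂ (Fin (n + 1)),
        A (Phi b p) = -A (Phi b q) := by
  set c : ℂ := ⟪p, q⟫ with hc
  set cb : ℂ := (starRingEnd ℂ) c with hcb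
  have hcbc : (starRingEnd ℂ) cb = c := Complex.conj_conj c
  have hcle : ‖c‖ ≤ 1 := by
    have := norm_inner_le_norm (𝕜 := ℂ) p q
    rwa [hp, hq, one_mul] at this
  have hc1 : c ≠ 1 := fun h => hpq ((inner_eq_one_iff_of_norm_eq_one hp hq).mp h)
  have hu : (1 : ℂ) - c ≠ 0 := sub_ne_zero.mpr (fun h => hc1 h.symm)
  have hub : (1 : ℂ) - cb ≠ 0 := by
    intro h
    apply hu
    have := congrArg (starRingEnd ℂ) h
    simpa [hcbc, map_ofNat] using this
  have hv : (2 : ℂ) - c ≠ 0 := by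
    intro h
    have : c = 2 := by linear_combination -h
    rw [this] at hcle; norm_num at hcle
  have hvb : (2 : ℂ) - cb ≠ 0 := by
    intro h
    apply hv
    have := congrArg (starRingEnd ℂ) h
    simpa [hcbc, map_ofNat] using this
  set β₁ : ℂ := -(1 / (2 - cb)) with hβ₁
  set β₂ : ℂ := -((1 - cb) / (2 - cb)) with hβ₂
  set b : EuclideanSpace ℂ (Fin (n + 1)) := β₁ • p + β₂ • q with hb
  have hpp : ⟪p, p⟫ = (1 : ℂ) := by
    rw [inner_self_eq_norm_sq_to_K, hp]; norm_num
  have hqq : ⟪q, q⟫ = (1 : ℂ) := by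
    rw [inner_self_eq_norm_sq_to_K, hq]; norm_num
  have hqp : ⟪q, p⟫ = cb := by rw [hcb, hc, inner_conj_symm]
  have hcβ₁ : (starRingEnd ℂ) β₁ = -(1 / (2 - c)) := by
    simp [hβ₁, map_div₀, hcbc, map_ofNat]
  have hcβ₂ : (starRingEnd ℂ) β₂ = -((1 - c) / (2 - c)) := by
    simp [hβ₂, map_div₀, hcbc, map_ofNat]
  have hbp : ⟪b, p⟫ = (1 - c) * (1 - cb) / (2 - c) - 1 := by
    rw [hb, inner_add_left, inner_smul_left, inner_smul_left, hpp, hqp, hcβ₁, hcβ₂]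
    field_simp
    ring
  have hbq : ⟪b, q⟫ = (1 - c) / (2 - c) - 1 := by
    rw [hb, inner_add_left, inner_smul_left, inner_smul_left, ← hc, hqq, hcβ₁, hcβ₂]
    field_simp
    ring
  have hbb : ⟪b, b⟫ = (2 - c * cb) / ((2 - c) * (2 - cb)) := by
    calc ⟪b, b⟫ = β₁ * ⟪b, p⟫ + β₂ * ⟪b, q⟫ := by
          rw [hb]; rw [inner_add_right, inner_smul_right, inner_smul_right]
      _ = (2 - c * cb) / ((2 - c) * (2 - cb)) := by
          rw [hbp, hbq, hβ₁, hβ₂]; field_simp; ring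
  set dp : ℂ := (1 - c) * (1 - cb) / (2 - c) with hdpdef
  set dq : ℂ := (1 - c) / (2 - c) with hdqdef
  have hdpne : dp ≠ 0 := by
    rw [hdpdef]; exact div_ne_zero (mul_ne_zero hu hub) hv
  have hdqne : dq ≠ 0 := by
    rw [hdqdef]; exact div_ne_zero hu hv
  have hnb : ((‖b‖ ^ 2 : ℝ) : ℂ) = (2 - c * cb) / ((2 - c) * (2 - cb)) := by
    rw [← hbb, inner_self_eq_norm_sq_to_K]; norm_cast
  have hn1 : ((Complex.normSq (1 - c) : ℝ) : ℂ) = (1 - c) * (1 - cb) := by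
    rw [← Complex.mul_conj]; simp [hcb]
  have hn2 : ((Complex.normSq (2 - c) : ℝ) : ℂ) = (2 - c) * (2 - cb) := by
    rw [← Complex.mul_conj]; simp [hcb, map_ofNat]
  have hKb : 1 - ‖b‖ ^ 2 = 2 * Complex.normSq (1 - c) / Complex.normSq (2 - c) := by
    have h : ((1 - ‖b‖ ^ 2 : ℝ) : ℂ) =
        ((2 * Complex.normSq (1 - c) / Complex.normSq (2 - c) : ℝ) : ℂ) := by
      rw [Complex.ofReal_sub, Complex.ofReal_one, hnb, Complex.ofReal_div, Complex.ofReal_mul,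
        hn1, hn2]
      push_cast
      field_simp
      ring
    exact_mod_cast h
  have hKpos : 0 < 1 - ‖b‖ ^ 2 := by
    rw [hKb]
    exact div_pos (by nlinarith [Complex.normSq_pos.mpr hu]) (Complex.normSq_pos.mpr hv)
  have hblt : ‖b‖ < 1 := by nlinarith [norm_nonneg b]
  refine ⟨b, hblt, LinearIsometryEquiv.refl ℂ (EuclideanSpace ℂ (Fin (n+1))), ?_⟩
  set s : ℝ := Real.sqrt (1 - ‖b‖ ^ 2) with hsdef
  have hs_nonneg : (0:ℝ) ≤ s := Real.sqrt_nonneg _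
  have hs2 : ((s:ℂ))^2 = 2*(1-c)*(1-cb)/((2-c)*(2-cb)) := by
    have h1 : s^2 = 1 - ‖b‖^2 := Real.sq_sqrt (le_of_lt hKpos)
    calc ((s:ℂ))^2 = ((s^2 : ℝ) : ℂ) := by push_cast; ring
      _ = 1 - ((‖b‖^2 : ℝ):ℂ) := by rw [h1]; push_cast; ring
      _ = _ := by rw [hnb]; field_simp; ring
  have h1s : (1:ℂ) + (s:ℝ) ≠ 0 := by
    intro h
    have h' : (1 + s : ℝ) = 0 := by exact_mod_cast h
    linarith
  have hnb2 : ((‖b‖ ^ 2 : ℝ) : ℂ) = 1 - ((s:ℝ) : ℂ) ^ 2 := by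
    have h1 : s ^ 2 = 1 - ‖b‖ ^ 2 := Real.sq_sqrt (le_of_lt hKpos)
    have : (((1 : ℝ) - ‖b‖ ^ 2 : ℝ) : ℂ) = ((s ^ 2 : ℝ) : ℂ) := by rw [h1]
    push_cast at this ⊢
    linear_combination -this
  have h1 : β₁ * (2 - cb) = -1 := by rw [hβ₁]; field_simp
  have h2 : β₂ = (1 - cb) * β₁ := by rw [hβ₁, hβ₂]; ring
  have h3 : dp = (1 - cb) * dq := by rw [hdpdef, hdqdef]; ring
  have h4 : ((s:ℝ) : ℂ) ^ 2 = -(2 * β₁ * dp) := by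
    rw [hs2, hβ₁, hdpdef]; field_simp
  show Phi b p = -Phi b q
  rw [eq_neg_iff_add_eq_zero]
  simp only [Phi]
  rw [← hsdef, hbp, hbq, hnb2]
  rw [hb]
  match_scalars
  · exact aux_antipodal₁ cb _ dp dq β₁ β₂ hdpne hdqne h1s h1 h2 h3 h4
  · exact aux_antipodal₂ cb _ dp dq β₁ β₂ hdpne hdqne h1s h1 h2 h3 h4
end
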